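/- Let F : Ω → U be a continuous frame with frame operator S and bounds A₀, B. Then ω ↦ S⁻¹(F(ω)) is a continuous frame for U with bounds B⁻¹ and A₀⁻¹, and its frame operator is S⁻¹. -/

import Mathlib

open MeasureTheory CStarModule
open scoped RightActions

/-- Hilbert C⋆-module with a *right* `A`-action, as `CStarModule` was defined in Mathlib
of December 2024 (Mathlib's `CStarModule` now uses a left action `SMul A E`). -/
class RightCStarModule (A : outParam <| Type*) (E : Type*) [NonUnitalSemiring A] [StarRing A]
    [Module ℂ A] [AddCommGroup E] [Module ℂ E] [PartialOrder A] [SMul Aᵐᵒᵖ E] [Norm A] [Norm E]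
    extends Inner A E where
  inner_add_right {x} {y} {z} : inner x (y + z) = inner x y + inner x z
  inner_self_nonneg {x} : 0 ≤ inner x x
  inner_self {x} : inner x x = 0 ↔ x = 0
  inner_op_smul_right {a : A} {x y : E} : inner x (y <• a) = inner x y * a
  inner_smul_right_complex {z : ℂ} {x} {y} : inner x (z • y) = z • inner x y
  star_inner x y : star (inner x y) = inner y x
  norm_eq_sqrt_norm_inner_self x : ‖x‖ = Real.sqrt ‖inner x x‖

variable {A : Type*} [CStarAlgebra A] [PartialOrder A] [StarOrderedRing A]
variable {U : Type*} [NormedAddCommGroup U] [NormedSpace ℂ U] [CompleteSpace U]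
  [SMul Aᵐᵒᵖ U] [RightCStarModule A U]
variable {Ω : Type*} [MeasurableSpace Ω]

local notation "⟪" x ", " y "⟫" => (inner A x y : A)

/-- `F : Ω → U` is a continuous frame for the Hilbert C*-module `U` with bounds `A₀`, `B`. -/
def IsContinuousFrame (μ : Measure Ω) (F : Ω → U) (A₀ B : ℝ) : Prop :=
  0 < A₀ ∧ 0 < B ∧
  (∀ f : U, StronglyMeasurable fun ω => (inner A f (F ω) : A)) ∧
  (∀ f : U, Integrable (fun ω => (inner A f (F ω) : A) * inner A (F ω) f) μ) ∧
  ∀ f : U, A₀ • (inner A f f : A) ≤ (∫ ω, (inner A f (F ω) : A) * inner A (F ω) f ∂μ) ∧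
    (∫ ω, (inner A f (F ω) : A) * inner A (F ω) f ∂μ) ≤ B • (inner A f f : A)

/-- `F : Ω → U` is a continuous Bessel mapping with bound `B`. -/
def IsBessel (μ : Measure Ω) (F : Ω → U) (B : ℝ) : Prop :=
  0 < B ∧
  (∀ f : U, StronglyMeasurable fun ω => (inner A f (F ω) : A)) ∧
  (∀ f : U, Integrable (fun ω => (inner A f (F ω) : A) * inner A (F ω) f) μ) ∧
  ∀ f : U, (∫ ω, (inner A f (F ω) : A) * inner A (F ω) f ∂μ) ≤ B • (inner A f f : A)

/-- `φ : Ω → A` belongs to the Hilbert `A`-module `L²(Ω, A)`. -/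
def MemL2 (μ : Measure Ω) (φ : Ω → A) : Prop :=
  AEStronglyMeasurable φ μ ∧ Integrable (fun ω => star (φ ω) * φ ω) μ

/-- `G` is a dual of the continuous Bessel mapping `F` (weak reconstruction formula). -/
def IsDual (μ : Measure Ω) (F G : Ω → U) : Prop :=
  (∃ B : ℝ, IsBessel μ G B) ∧
  ∀ f g : U, (inner A f g : A) = ∫ ω, (inner A f (G ω) : A) * inner A (F ω) g ∂μ

/-! The frame operator `S` is symmetric for the `A`-valued inner product, hence so is its right
inverse `S⁻¹`, and `⟪f, S⁻¹ F ω⟫ = ⟪S⁻¹ f, F ω⟫`. So the integrand of the dual family at `f` is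
the integrand of `F` at `S⁻¹ f`, and its integral is `⟪S⁻¹ f, S S⁻¹ f⟫ = ⟪S⁻¹ f, f⟫`. The frame
bounds `A₀ ≤ S ≤ B` give `A₀ S ≤ S² ≤ B S` without any functional calculus, by writing the
differences as sums of manifestly positive terms; evaluated at `S⁻¹ f` these are the bounds
`B⁻¹ ≤ S⁻¹ ≤ A₀⁻¹`. -/

theorem MeasureTheory.integral_star {Ω G : Type*} [MeasurableSpace Ω] {μ : Measure Ω}
    [NormedAddCommGroup G] [NormedSpace ℝ G] [StarAddMonoid G] [StarModule ℝ G] [ContinuousStar G]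
    (φ : Ω → G) : ∫ ω, star (φ ω) ∂μ = star (∫ ω, φ ω ∂μ) :=
  (starL' ℝ : G ≃L[ℝ] G).integral_comp_comm φ

namespace RightCStarModule

variable {𝒜 E : Type*} [CStarAlgebra 𝒜] [PartialOrder 𝒜] [AddCommGroup E] [Module ℂ E]
  [SMul 𝒜ᵐᵒᵖ E] [Norm E] [RightCStarModule 𝒜 E]

theorem inner_sub_right (x y z : E) : inner 𝒜 x (y - z) = inner 𝒜 x y - inner 𝒜 x z :=
  (AddMonoidHom.mk' (inner 𝒜 x) fun _ _ => inner_add_right).map_sub y z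

theorem inner_sub_left (x y z : E) : inner 𝒜 (x - y) z = inner 𝒜 x z - inner 𝒜 y z := by
  rw [← star_inner z, inner_sub_right, star_sub, star_inner, star_inner]

theorem inner_real_smul_right (r : ℝ) (x y : E) : inner 𝒜 x (r • y) = r • inner 𝒜 x y := by
  rw [← Complex.coe_smul, inner_smul_right_complex, Complex.coe_smul]

theorem inner_real_smul_left (r : ℝ) (x y : E) : inner 𝒜 (r • x) y = r • inner 𝒜 x y := by
  rw [← star_inner y, inner_real_smul_right, star_smul, star_trivial, star_inner]

variable (𝒜) in
def IsSymmetric (T : E → E) : Prop :=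
  ∀ x y, inner 𝒜 (T x) y = inner 𝒜 x (T y)

theorem IsSymmetric.rightInverse {T T' : E → E} (hT : IsSymmetric 𝒜 T)
    (hT' : Function.RightInverse T' T) : IsSymmetric 𝒜 T' := fun x y => by
  conv_lhs => rw [← hT' y]
  rw [← hT, hT']

theorem isSymmetric_of_inner_eq_integral {Ω : Type*} [MeasurableSpace Ω] {μ : Measure Ω}
    {F : Ω → E} {S : E → E}
    (hS : ∀ f g, inner 𝒜 g (S f) = ∫ ω, inner 𝒜 g (F ω) * inner 𝒜 (F ω) f ∂μ) :
    IsSymmetric 𝒜 S := fun x y => by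
  rw [← star_inner, hS, hS, ← integral_star]
  simp only [star_mul, star_inner]

section Order

variable [StarOrderedRing 𝒜] {T : E → E}

theorem smul_inner_apply_le_inner_apply_apply (hT : IsSymmetric 𝒜 T) {a : ℝ} (ha : 0 ≤ a)
    (hlow : ∀ x, a • inner 𝒜 x x ≤ inner 𝒜 x (T x)) (g : E) :
    a • inner 𝒜 g (T g) ≤ inner 𝒜 (T g) (T g) := by
  -- `T² - a T = (T - a)² + a (T - a)`
  have key : inner 𝒜 (T g) (T g) - a • inner 𝒜 g (T g) =
      inner 𝒜 (T g - a • g) (T g - a • g) + a • (inner 𝒜 g (T g) - a • inner 𝒜 g g) := by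
    simp only [inner_sub_left, inner_sub_right, inner_real_smul_left, inner_real_smul_right,
      hT g g]
    module
  rw [← sub_nonneg, key]
  exact add_nonneg inner_self_nonneg (smul_nonneg ha (sub_nonneg.2 (hlow g)))

theorem inner_apply_apply_le_smul_inner_apply (hT : IsSymmetric 𝒜 T)
    (hpos : ∀ x, 0 ≤ inner 𝒜 x (T x)) {b : ℝ} (hb : 0 < b)
    (hup : ∀ x, inner 𝒜 x (T x) ≤ b • inner 𝒜 x x) (g : E) :
    inner 𝒜 (T g) (T g) ≤ b • inner 𝒜 g (T g) := by
  obtain ⟨m, hm_def⟩ : ∃ m, m = b • g - T g := ⟨_, rfl⟩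
  have hm : inner 𝒜 m (T m) = b • inner 𝒜 (T g) m - inner 𝒜 (T (T g)) m := by
    nth_rw 1 [hm_def]
    rw [inner_sub_left, inner_real_smul_left, ← hT g m, ← hT (T g) m]
  -- `b T (b - T) = (b - T) T (b - T) + T (b - T) T`, evaluated at `g`
  have key : b • (b • inner 𝒜 g (T g) - inner 𝒜 (T g) (T g)) =
      inner 𝒜 m (T m) + (b • inner 𝒜 (T g) (T g) - inner 𝒜 (T g) (T (T g))) := by
    rw [hm, hm_def]
    simp only [inner_sub_right, inner_real_smul_right]
    simp only [hT _ _]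
    module
  have h : 0 ≤ b • (b • inner 𝒜 g (T g) - inner 𝒜 (T g) (T g)) :=
    key ▸ add_nonneg (hpos m) (sub_nonneg.2 (hup (T g)))
  exact sub_nonneg.1 ((smul_nonneg_iff_nonneg_of_pos_left hb).1 h)

theorem IsSymmetric.rightInverse_bounds (hT : IsSymmetric 𝒜 T) {T' : E → E}
    (hT' : Function.RightInverse T' T) {a b : ℝ} (ha : 0 < a) (hb : 0 < b)
    (hbounds : ∀ x, a • inner 𝒜 x x ≤ inner 𝒜 x (T x) ∧ inner 𝒜 x (T x) ≤ b • inner 𝒜 x x)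
    (f : E) : b⁻¹ • inner 𝒜 f f ≤ inner 𝒜 (T' f) f ∧ inner 𝒜 (T' f) f ≤ a⁻¹ • inner 𝒜 f f := by
  have hpos x : 0 ≤ inner 𝒜 x (T x) :=
    (smul_nonneg ha.le inner_self_nonneg).trans (hbounds x).1
  have hlow := smul_inner_apply_le_inner_apply_apply hT ha.le (fun x => (hbounds x).1) (T' f)
  have hup := inner_apply_apply_le_smul_inner_apply hT hpos hb (fun x => (hbounds x).2) (T' f)
  rw [hT' f] at hlow hup
  exact ⟨(inv_smul_le_iff_of_pos hb).2 hup, (le_inv_smul_iff_of_pos ha).2 hlow⟩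

end Order

end RightCStarModule

theorem canonical_dual_frame_general (μ : Measure Ω) (F : Ω → U) (A₀ B : ℝ)
    (hF : IsContinuousFrame μ F A₀ B) (S Sinv : U → U)
    (hS : ∀ f g : U, ⟪g, S f⟫ = ∫ ω, ⟪g, F ω⟫ * ⟪F ω, f⟫ ∂μ)
    (hSr : ∀ f : U, S (Sinv f) = f) :
    IsContinuousFrame μ (fun ω => Sinv (F ω)) B⁻¹ A₀⁻¹ ∧
    ∀ f g : U, ⟪g, Sinv f⟫ = ∫ ω, ⟪g, Sinv (F ω)⟫ * ⟪Sinv (F ω), f⟫ ∂μ := by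
  obtain ⟨hA₀, hB, hmeas, hint, hbounds⟩ := hF
  have hS_symm : RightCStarModule.IsSymmetric A S :=
    RightCStarModule.isSymmetric_of_inner_eq_integral hS
  have hSinv_symm : RightCStarModule.IsSymmetric A Sinv := hS_symm.rightInverse hSr
  have dual_coeff_right f ω : ⟪f, Sinv (F ω)⟫ = ⟪Sinv f, F ω⟫ := (hSinv_symm f (F ω)).symm
  have dual_coeff_left f ω : ⟪Sinv (F ω), f⟫ = ⟪F ω, Sinv f⟫ := hSinv_symm (F ω) f
  have dual_integral f g : ∫ ω, ⟪g, Sinv (F ω)⟫ * ⟪Sinv (F ω), f⟫ ∂μ = ⟪Sinv g, f⟫ := by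
    simp only [dual_coeff_right, dual_coeff_left]
    rw [← hS, hSr]
  refine ⟨⟨inv_pos.2 hB, inv_pos.2 hA₀, fun f => ?_, fun f => ?_, fun f => ?_⟩, fun f g => ?_⟩
  · simpa only [dual_coeff_right] using hmeas (Sinv f)
  · simpa only [dual_coeff_right, dual_coeff_left] using hint (Sinv f)
  · rw [dual_integral]
    exact hS_symm.rightInverse_bounds hSr hA₀ hB (fun x => hS x x ▸ hbounds x) f
  · rw [dual_integral, hSinv_symm]

/-- If `F` is a continuous frame with bounds `A₀, B` and frame operator `S`, then
`ω ↦ S⁻¹(F(ω))` is a continuous frame with bounds `B⁻¹, A₀⁻¹` whose frame operator is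
`S⁻¹` (stated weakly). -/
theorem canonical_dual_frame (μ : Measure Ω) (F : Ω → U) (A₀ B : ℝ)
    (hF : IsContinuousFrame μ F A₀ B) (S Sinv : U → U)
    (hS : ∀ f g : U, ⟪g, S f⟫ = ∫ ω, ⟪g, F ω⟫ * ⟪F ω, f⟫ ∂μ)
    (hSl : ∀ f : U, Sinv (S f) = f) (hSr : ∀ f : U, S (Sinv f) = f) :
    IsContinuousFrame μ (fun ω => Sinv (F ω)) B⁻¹ A₀⁻¹ ∧
    ∀ f g : U, ⟪g, Sinv f⟫ = ∫ ω, ⟪g, Sinv (F ω)⟫ * ⟪Sinv (F ω), f⟫ ∂μ :=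
  canonical_dual_frame_general μ F A₀ B hF S Sinv hS hSr
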